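/- arXiv:0910.5331 — 2 statements merged into one kernel-verified Lean document; each statement's English description precedes it below -/
import Mathlib

section
/- For each λ > 0 there exists a positive constant C_λ such that for every ε > 0 and every holomorphic map g : Δ → Δ satisfying |1 − g(0)| ≤ ε, one has |1 − g(ζ)| ≤ λ whenever |ζ| ≤ 1 − C_λ ε. -/
open Metric Set Filter MeasureTheory
open scoped Topology

noncomputable section

variable {E : Type*} [NormedAddCommGroup E] [NormedSpace ℂ E]
variable {F : Type*} [NormedAddCommGroup F] [NormedSpace ℂ F]

/-- The infinitesimal Kobayashi (Kobayashi–Royden) metric of a set `D`. -/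
def kobMetric (D : Set E) (z : E) (v : E) : ℝ :=
  sInf {c : ℝ | ∃ α : ℝ, 0 < α ∧ c = 1 / α ∧ ∃ f : ℂ → E,
    DifferentiableOn ℂ f (ball 0 1) ∧ MapsTo f (ball 0 1) D ∧ f 0 = z ∧ deriv f 0 = α • v}

/-- The Kobayashi length of a path. -/
def kobLength (D : Set E) (γ : ℝ → E) : ℝ :=
  ∫ t in (0:ℝ)..1, kobMetric D (γ t) (deriv γ t)

/-- The (integrated) Kobayashi distance on a set `D`. -/
def kobDist (D : Set E) (p q : E) : ℝ :=
  sInf {c : ℝ | ∃ γ : ℝ → E, ContDiffOn ℝ 1 γ (Icc 0 1) ∧ MapsTo γ (Icc 0 1) D ∧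
    γ 0 = p ∧ γ 1 = q ∧ c = kobLength D γ}

/-- Kobayashi metric ball of radius `r` centered at `p`. -/
def kobBall (D : Set E) (p : E) (r : ℝ) : Set E :=
  {q ∈ D | kobDist D p q < r}

/-- `D` is (Kobayashi) hyperbolic: the Kobayashi distance separates points and induces
the ambient topology. -/
def IsKobHyperbolic (D : Set E) : Prop :=
  (∀ p ∈ D, ∀ q ∈ D, p ≠ q → 0 < kobDist D p q) ∧
  (∀ p ∈ D, ∀ ε : ℝ, 0 < ε → ∃ δ > 0, ∀ q ∈ D, kobDist D p q < δ → ‖q - p‖ < ε)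

/-- `D` is complete with respect to the Kobayashi distance: every Kobayashi-Cauchy
sequence converges to a point of `D`. -/
def KobComplete (D : Set E) : Prop :=
  ∀ u : ℕ → E, (∀ k, u k ∈ D) →
    (∀ ε : ℝ, 0 < ε → ∃ N : ℕ, ∀ m ≥ N, ∀ k ≥ N, kobDist D (u m) (u k) < ε) →
    ∃ x ∈ D, Tendsto u atTop (𝓝 x)

/-- `f` is a biholomorphism of `D` onto `X`. -/
def IsBiholo (D : Set E) (X : Set F) (f : E → F) : Prop :=
  DifferentiableOn ℂ f D ∧ BijOn f D X ∧
    ∃ g : F → E, DifferentiableOn ℂ g X ∧ (∀ z ∈ D, g (f z) = z) ∧ (∀ w ∈ X, f (g w) = w)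

/-- `f` is a biholomorphic embedding of `D` into `X` (a biholomorphism onto its image). -/
def IsBiholoEmbed (D : Set E) (X : Set F) (f : E → F) : Prop :=
  DifferentiableOn ℂ f D ∧ MapsTo f D X ∧ InjOn f D ∧
    ∃ g : F → E, DifferentiableOn ℂ g (f '' D) ∧ ∀ z ∈ D, g (f z) = z

/-- Fridman's invariant `h_X(p, Ω)`. -/
def fridman (X : Set F) (p : F) (Ω : Set E) : ℝ :=
  sInf {c : ℝ | ∃ r : ℝ, 0 < r ∧ c = 1 / r ∧ ∃ f : E → F,
    IsBiholoEmbed Ω X f ∧ kobBall X p r ⊆ f '' Ω}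

/-- `D` is taut: every sequence of holomorphic discs in `D` has a subsequence converging
locally uniformly to a holomorphic disc in `D`, or a compactly divergent subsequence. -/
def IsTaut (D : Set E) : Prop :=
  IsOpen D ∧ ∀ f : ℕ → ℂ → E,
    (∀ k, DifferentiableOn ℂ (f k) (ball 0 1) ∧ MapsTo (f k) (ball 0 1) D) →
    (∃ φ : ℕ → ℕ, StrictMono φ ∧ ∃ g : ℂ → E, DifferentiableOn ℂ g (ball 0 1) ∧
        MapsTo g (ball 0 1) D ∧ ∀ K : Set ℂ, K ⊆ ball 0 1 → IsCompact K →
          TendstoUniformlyOn (fun k => f (φ k)) g atTop K) ∨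
    (∃ φ : ℕ → ℕ, StrictMono φ ∧ ∀ L : Set E, IsCompact L → L ⊆ D →
        ∀ K : Set ℂ, K ⊆ ball 0 1 → IsCompact K →
          ∀ᶠ k in atTop, ∀ z ∈ K, f (φ k) z ∉ L)

/-- The Poincaré (hyperbolic) distance on the unit disc. -/
def hypDist (z w : ℂ) : ℝ :=
  (1 / 2) * Real.log ((1 + ‖(z - w) / (1 - (starRingEnd ℂ) w * z)‖) /
    (1 - ‖(z - w) / (1 - (starRingEnd ℂ) w * z)‖))

end

/-!
Let `a = g 0`. Composing `g` with the disc automorphism `w ↦ (w - a) / (1 - ā w)` and applying the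
Schwarz lemma gives the Schwarz–Pick bound `|g ζ - a| ≤ |ζ| |1 - ā g ζ|`. Since `a` is within `ε`
of `1`, the right-hand side is at most `|ζ| (|1 - g ζ| + ε)`, so `(1 - |ζ|) |1 - g ζ| ≤ 2ε`.
Hence `C = 2 / λ` works.
-/

open ComplexConjugate

namespace Complex

theorem normSq_one_sub_conj_mul_sub_normSq_sub (a w : ℂ) :
    normSq (1 - conj a * w) - normSq (w - a) = (1 - normSq a) * (1 - normSq w) := by
  simp only [normSq_apply, mul_re, mul_im, sub_re, sub_im, conj_re, conj_im, one_re, one_im]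
  ring

theorem norm_sub_lt_norm_one_sub_conj_mul {a w : ℂ} (ha : ‖a‖ < 1) (hw : ‖w‖ < 1) :
    ‖w - a‖ < ‖1 - conj a * w‖ := by
  have hpos : 0 < (1 - normSq a) * (1 - normSq w) := by
    rw [← Complex.sq_norm, ← Complex.sq_norm]
    exact mul_pos (by nlinarith [norm_nonneg a]) (by nlinarith [norm_nonneg w])
  refine lt_of_pow_lt_pow_left₀ 2 (norm_nonneg _) ?_
  rw [Complex.sq_norm, Complex.sq_norm]
  linarith [normSq_one_sub_conj_mul_sub_normSq_sub a w]

theorem norm_one_sub_conj_mul_le (a : ℂ) {w : ℂ} (hw : ‖w‖ ≤ 1) :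
    ‖1 - conj a * w‖ ≤ ‖1 - w‖ + ‖1 - a‖ := calc
  ‖1 - conj a * w‖ = ‖(1 - w) + conj (1 - a) * w‖ := by simp only [map_sub, map_one]; ring_nf
  _ ≤ ‖1 - w‖ + ‖1 - a‖ * ‖w‖ := (norm_add_le _ _).trans_eq (by rw [norm_mul, norm_conj])
  _ ≤ ‖1 - w‖ + ‖1 - a‖ := by gcongr; exact mul_le_of_le_one_right (norm_nonneg _) hw

variable {g : ℂ → ℂ} (hd : DifferentiableOn ℂ g (ball 0 1)) (hm : MapsTo g (ball 0 1) (ball 0 1))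
include hd hm

theorem norm_sub_le_mul_norm_one_sub_conj_mul {ζ : ℂ} (hζ : ‖ζ‖ < 1) :
    ‖g ζ - g 0‖ ≤ ‖ζ‖ * ‖1 - conj (g 0) * g ζ‖ := by
  have ha : ‖g 0‖ < 1 := mem_ball_zero_iff.1 (hm (mem_ball_self one_pos))
  have hlt : ∀ z ∈ ball (0 : ℂ) 1, ‖g z - g 0‖ < ‖1 - conj (g 0) * g z‖ := fun z hz =>
    norm_sub_lt_norm_one_sub_conj_mul ha (mem_ball_zero_iff.1 (hm hz))
  have hden : ∀ z ∈ ball (0 : ℂ) 1, 1 - conj (g 0) * g z ≠ 0 := fun z hz =>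
    norm_pos_iff.1 ((norm_nonneg _).trans_lt (hlt z hz))
  set φ : ℂ → ℂ := fun z => (g z - g 0) / (1 - conj (g 0) * g z)
  have hφd : DifferentiableOn ℂ φ (ball 0 1) :=
    (hd.sub_const _).div ((differentiableOn_const 1).sub (hd.const_mul _)) hden
  have hφm : MapsTo φ (ball 0 1) (closedBall 0 1) := fun z hz => by
    rw [mem_closedBall_zero_iff, norm_div]
    exact div_le_one_of_le₀ (hlt z hz).le (norm_nonneg _)
  have hφζ := norm_le_norm_of_mapsTo_ball hφd hφm (by simp [φ]) hζ
  rwa [norm_div, div_le_iff₀ (norm_pos_iff.2 (hden ζ (mem_ball_zero_iff.2 hζ)))] at hφζ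

theorem one_sub_norm_mul_norm_one_sub_le {ζ : ℂ} (hζ : ‖ζ‖ < 1) :
    (1 - ‖ζ‖) * ‖1 - g ζ‖ ≤ (1 + ‖ζ‖) * ‖1 - g 0‖ := by
  have hw : ‖g ζ‖ ≤ 1 := (mem_ball_zero_iff.1 (hm (mem_ball_zero_iff.2 hζ))).le
  have hpick := norm_sub_le_mul_norm_one_sub_conj_mul hd hm hζ
  have hden := mul_le_mul_of_nonneg_left (norm_one_sub_conj_mul_le (g 0) hw) (norm_nonneg ζ)
  have htri : ‖1 - g ζ‖ ≤ ‖1 - g 0‖ + ‖g ζ - g 0‖ := calc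
    ‖1 - g ζ‖ = ‖(1 - g 0) - (g ζ - g 0)‖ := by ring_nf
    _ ≤ ‖1 - g 0‖ + ‖g ζ - g 0‖ := norm_sub_le _ _
  nlinarith

end Complex

/-- quantitative Schwarz lemma near the boundary point `1`. -/
theorem stmt3 (lam : ℝ) (hlam : 0 < lam) :
    ∃ C : ℝ, 0 < C ∧ ∀ ε : ℝ, 0 < ε →
      ∀ g : ℂ → ℂ, DifferentiableOn ℂ g (ball 0 1) → MapsTo g (ball 0 1) (ball 0 1) →
        ‖1 - g 0‖ ≤ ε →
        ∀ ζ : ℂ, ‖ζ‖ ≤ 1 - C * ε → ‖1 - g ζ‖ ≤ lam := by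
  refine ⟨2 / lam, by positivity, fun ε hε g hd hm hg0 ζ hζ => ?_⟩
  have hCε : 0 < 2 / lam * ε := by positivity
  have hζ1 : ‖ζ‖ < 1 := by linarith
  refine le_of_mul_le_mul_left ?_ hCε
  calc 2 / lam * ε * ‖1 - g ζ‖
      ≤ (1 - ‖ζ‖) * ‖1 - g ζ‖ := by gcongr; linarith
    _ ≤ (1 + ‖ζ‖) * ‖1 - g 0‖ :=
      Complex.one_sub_norm_mul_norm_one_sub_le hd hm hζ1
    _ ≤ 2 * ε := by gcongr; linarith
    _ = 2 / lam * ε * lam := by field_simp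
end

section
/- The unit ball 𝔹ⁿ in ℂⁿ (n ≥ 2) is not biholomorphic to any product 𝔹^{n₁} × ⋯ × 𝔹^{n_k} of balls with k ≥ 2 and n₁ + ⋯ + n_k = n. -/
open Metric Set Filter MeasureTheory
open scoped Topology

/-!
A biholomorphism between the unit balls of two complex normed spaces that fixes the origin is
linear to first order (Cartan): by the Schwarz lemma its derivative at `0` and that of its
inverse have norm at most `1`, so the derivative is a linear isometry. The automorphisms
`ballInvolution a` act transitively on the Euclidean ball, so a biholomorphism of `𝔹ⁿ` onto the
product may be assumed to fix `0`; this gives a linear isometry of `ℂⁿ` onto the product of the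
`ℂ^{nᵢ}` with the sup norm. None exists: the Euclidean unit sphere contains no segment, whereas
the boundary of a product of at least two balls does.
-/

noncomputable section

open scoped InnerProductSpace

section BallInvolution

variable {G : Type*} [NormedAddCommGroup G]

def ballScale (a : G) : ℝ := √(1 - ‖a‖ ^ 2)

lemma sq_ballScale {a : G} (ha : ‖a‖ ≤ 1) : ballScale a ^ 2 = 1 - ‖a‖ ^ 2 :=
  Real.sq_sqrt (by nlinarith [norm_nonneg a])

lemma inv_one_add_ballScale_mul {a : G} (ha : ‖a‖ ≤ 1) :
    (1 + ballScale a)⁻¹ * ‖a‖ ^ 2 = 1 - ballScale a := by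
  have h0 : 0 ≤ ballScale a := Real.sqrt_nonneg _
  rw [inv_mul_eq_iff_eq_mul₀ (by positivity)]
  linear_combination sq_ballScale ha

variable [InnerProductSpace ℂ G]

/-- Rudin's involution `φ_a z = (a - P_a z - s_a Q_a z) / (1 - ⟪a, z⟫)` exchanging `0` and `a`,
where `P_a z = ⟪a, z⟫ a / ‖a‖²`, `Q_a = 1 - P_a` and `s_a = ballScale a`; since
`(1 - s_a) / ‖a‖² = 1 / (1 + s_a)`, this form needs no separate case `a = 0`. -/
def ballInvolution (a z : G) : G :=
  (1 - ⟪a, z⟫_ℂ)⁻¹ •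
    ((1 - ((1 + ballScale a)⁻¹ : ℝ) * ⟪a, z⟫_ℂ) • a - (ballScale a : ℂ) • z)

lemma ballInvolution_zero (a : G) : ballInvolution a 0 = a := by
  simp [ballInvolution]

lemma inner_ne_one_of_mem_ball {a z : G} (ha : ‖a‖ ≤ 1) (hz : ‖z‖ < 1) : ⟪a, z⟫_ℂ ≠ 1 := by
  intro h
  have := norm_inner_le_norm (𝕜 := ℂ) a z
  rw [h, norm_one] at this
  nlinarith [norm_nonneg a, norm_nonneg z]

lemma one_sub_norm_sq_ballInvolution {a z : G} (ha : ‖a‖ ≤ 1) (hz : ⟪a, z⟫_ℂ ≠ 1) :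
    ‖1 - ⟪a, z⟫_ℂ‖ ^ 2 * (1 - ‖ballInvolution a z‖ ^ 2) = (1 - ‖a‖ ^ 2) * (1 - ‖z‖ ^ 2) := by
  rw [ballInvolution, norm_smul, mul_pow, norm_inv]
  set s := ballScale a
  set r := (1 + s)⁻¹
  set α := ⟪a, z⟫_ℂ
  have hs0 : 0 ≤ s := Real.sqrt_nonneg _
  have hs := sq_ballScale ha
  have hr := inv_one_add_ballScale_mul ha
  have hrs : r * (1 + s) = 1 := inv_mul_cancel₀ (by positivity)
  have hnum : ‖(1 - (r : ℂ) * α) • a - (s : ℂ) • z‖ ^ 2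
      = ‖1 - α‖ ^ 2 - (1 - ‖a‖ ^ 2) * (1 - ‖z‖ ^ 2) := by
    rw [norm_sub_sq (𝕜 := ℂ), inner_smul_left, inner_smul_right, norm_smul, norm_smul,
      mul_pow, mul_pow, Complex.norm_real, Real.norm_of_nonneg hs0]
    simp only [← Complex.normSq_eq_norm_sq, RCLike.re_to_complex, Complex.normSq_apply,
      Complex.mul_re, Complex.mul_im, Complex.sub_re, Complex.sub_im, Complex.one_re,
      Complex.one_im, Complex.ofReal_re, Complex.ofReal_im, Complex.conj_re, Complex.conj_im]
    linear_combination (-2 * α.re + (α.re ^ 2 + α.im ^ 2) * r) * hr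
      + (α.re ^ 2 + α.im ^ 2) * hrs + ‖z‖ ^ 2 * hs
  have hden : 0 < ‖1 - α‖ := norm_pos_iff.mpr (sub_ne_zero.mpr hz.symm)
  rw [hnum]
  field_simp
  ring

lemma mapsTo_ballInvolution {a : G} (ha : ‖a‖ < 1) :
    MapsTo (ballInvolution a) (ball 0 1) (ball 0 1) := by
  intro z hz
  rw [mem_ball_zero_iff] at hz ⊢
  have hden : 0 < ‖1 - ⟪a, z⟫_ℂ‖ :=
    norm_pos_iff.mpr (sub_ne_zero.mpr (inner_ne_one_of_mem_ball ha.le hz).symm)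
  have key := one_sub_norm_sq_ballInvolution ha.le (inner_ne_one_of_mem_ball ha.le hz)
  have hpos : 0 < (1 - ‖a‖ ^ 2) * (1 - ‖z‖ ^ 2) := by
    apply mul_pos <;> nlinarith [norm_nonneg a, norm_nonneg z]
  have : ‖ballInvolution a z‖ ^ 2 < 1 := by nlinarith [pow_pos hden 2]
  exact (sq_lt_one_iff₀ (norm_nonneg _)).mp this

lemma inner_ballInvolution {a : G} (ha : ‖a‖ ≤ 1) (z : G) :
    ⟪a, ballInvolution a z⟫_ℂ = (‖a‖ ^ 2 - ⟪a, z⟫_ℂ) / (1 - ⟪a, z⟫_ℂ) := by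
  have hr : (((1 + ballScale a)⁻¹ : ℝ) : ℂ) * (‖a‖ ^ 2 : ℝ) = 1 - (ballScale a : ℂ) := by
    exact_mod_cast congrArg Complex.ofReal (inv_one_add_ballScale_mul ha)
  rw [ballInvolution, inner_smul_right, inner_sub_right, inner_smul_right, inner_smul_right,
    inner_self_eq_norm_sq_to_K, div_eq_inv_mul]
  congr 1
  push_cast at hr ⊢
  linear_combination (-⟪a, z⟫_ℂ) * hr

lemma ballInvolution_ballInvolution {a z : G} (ha : ‖a‖ < 1) (hz : ⟪a, z⟫_ℂ ≠ 1) :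
    ballInvolution a (ballInvolution a z) = z := by
  have hA : (1 : ℂ) - (‖a‖ : ℂ) ^ 2 ≠ 0 := by
    norm_cast; nlinarith [norm_nonneg a]
  have hβ : (1 : ℂ) - ⟪a, z⟫_ℂ ≠ 0 := sub_ne_zero.mpr hz.symm
  have hs1 : (1 : ℂ) + (ballScale a : ℂ) ≠ 0 := by
    have : 0 ≤ ballScale a := Real.sqrt_nonneg _
    norm_cast; positivity
  have hs : (ballScale a : ℂ) ^ 2 = 1 - (‖a‖ : ℂ) ^ 2 := by
    exact_mod_cast congrArg Complex.ofReal (sq_ballScale ha.le)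
  have hβ' : 1 - ⟪a, ballInvolution a z⟫_ℂ = (1 - (‖a‖ : ℂ) ^ 2) / (1 - ⟪a, z⟫_ℂ) := by
    rw [inner_ballInvolution ha.le]
    field_simp
    ring
  rw [ballInvolution, hβ', inner_ballInvolution ha.le, ballInvolution]
  push_cast
  generalize (ballScale a : ℂ) = s at *
  match_scalars
  · field_simp
    linear_combination -hs
  · field_simp
    linear_combination hs

lemma differentiableOn_ballInvolution {a : G} (ha : ‖a‖ ≤ 1) :
    DifferentiableOn ℂ (ballInvolution a) (ball 0 1) := by
  have hinner : Differentiable ℂ (fun z : G => ⟪a, z⟫_ℂ) := (innerSL ℂ a).differentiable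
  refine DifferentiableOn.smul ?_ (by fun_prop)
  refine ((differentiableOn_const 1).sub hinner.differentiableOn).inv fun z hz => ?_
  exact sub_ne_zero.mpr (inner_ne_one_of_mem_ball ha (mem_ball_zero_iff.mp hz)).symm

theorem isBiholo_ballInvolution {a : G} (ha : ‖a‖ < 1) :
    IsBiholo (ball (0 : G) 1) (ball 0 1) (ballInvolution a) := by
  have hinv : InvOn (ballInvolution a) (ballInvolution a) (ball 0 1) (ball 0 1) :=
    ⟨fun z hz => ballInvolution_ballInvolution ha
        (inner_ne_one_of_mem_ball ha.le (mem_ball_zero_iff.mp hz)),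
      fun z hz => ballInvolution_ballInvolution ha
        (inner_ne_one_of_mem_ball ha.le (mem_ball_zero_iff.mp hz))⟩
  exact ⟨differentiableOn_ballInvolution ha.le,
    hinv.bijOn (mapsTo_ballInvolution ha) (mapsTo_ballInvolution ha),
    ballInvolution a, differentiableOn_ballInvolution ha.le, hinv.1, hinv.2⟩

end BallInvolution

section LinearIsometry

variable {𝕜 E F : Type*} [NontriviallyNormedField 𝕜] [NormedAddCommGroup E] [NormedSpace 𝕜 E]
  [NormedAddCommGroup F] [NormedSpace 𝕜 F]

theorem fderiv_comp_fderiv_eq_id_of_eventuallyEq {f : E → F} {g : F → E} {x : E}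
    (hf : DifferentiableAt 𝕜 f x) (hg : DifferentiableAt 𝕜 g (f x)) (hgf : g ∘ f =ᶠ[𝓝 x] id) :
    (fderiv 𝕜 g (f x)).comp (fderiv 𝕜 f x) = ContinuousLinearMap.id 𝕜 E :=
  ((hg.hasFDerivAt.comp x hf.hasFDerivAt).congr_of_eventuallyEq hgf.symm).unique
    (hasFDerivAt_id x)

theorem nonempty_linearIsometryEquiv_of_opNorm_le_one {L : E →L[𝕜] F} {M : F →L[𝕜] E}
    (hL : ‖L‖ ≤ 1) (hM : ‖M‖ ≤ 1) (hLM : L.comp M = .id 𝕜 F) (hML : M.comp L = .id 𝕜 E) :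
    Nonempty (E ≃ₗᵢ[𝕜] F) := by
  refine ⟨{ (ContinuousLinearEquiv.equivOfInverse' L M hLM hML).toLinearEquiv with
    norm_map' := fun v => le_antisymm ?_ ?_ }⟩
  · simpa using L.le_of_opNorm_le hL v
  · calc ‖v‖ = ‖M (L v)‖ := by rw [← ContinuousLinearMap.comp_apply, hML]; rfl
      _ ≤ ‖L v‖ := by simpa using M.le_of_opNorm_le hM (L v)

end LinearIsometry

section Biholo

variable {E F H : Type*} [NormedAddCommGroup E] [NormedSpace ℂ E]
  [NormedAddCommGroup F] [NormedSpace ℂ F] [NormedAddCommGroup H] [NormedSpace ℂ H]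

theorem IsBiholo.exists_inv {D : Set E} {X : Set F} {f : E → F} (hf : IsBiholo D X f) :
    ∃ g : F → E, DifferentiableOn ℂ g X ∧ MapsTo g X D ∧ InvOn g f D X := by
  obtain ⟨-, hbij, g, hgd, hgf, hfg⟩ := hf
  refine ⟨g, hgd, fun w hw => ?_, hgf, hfg⟩
  obtain ⟨z, hz, rfl⟩ := hbij.surjOn hw
  rwa [hgf z hz]

theorem IsBiholo.comp {D : Set E} {X : Set F} {Y : Set H} {f : E → F} {f' : F → H}
    (hf' : IsBiholo X Y f') (hf : IsBiholo D X f) : IsBiholo D Y (f' ∘ f) := by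
  obtain ⟨g, hgd, hgm, hgf⟩ := hf.exists_inv
  obtain ⟨g', hgd', hgm', hgf'⟩ := hf'.exists_inv
  have hinv := hgf.comp hgf' hf.2.1.mapsTo hgm'
  exact ⟨hf'.1.comp hf.1 hf.2.1.mapsTo, hf'.2.1.comp hf.2.1, g ∘ g', hgd.comp hgd' hgm',
    hinv.1, hinv.2⟩

theorem IsBiholo.nonempty_linearIsometryEquiv_of_map_zero {f : E → F}
    (hf : IsBiholo (ball (0 : E) 1) (ball (0 : F) 1) f) (h0 : f 0 = 0) :
    Nonempty (E ≃ₗᵢ[ℂ] F) := by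
  obtain ⟨g, hgd, hgm, hgf⟩ := hf.exists_inv
  have hg0 : g 0 = 0 := by simpa [h0] using hgf.1 (mem_ball_self one_pos)
  have hballE : ball (0 : E) 1 ∈ 𝓝 0 := ball_mem_nhds 0 one_pos
  have hballF : ball (0 : F) 1 ∈ 𝓝 0 := ball_mem_nhds 0 one_pos
  have hfd : DifferentiableAt ℂ f 0 := hf.1.differentiableAt hballE
  have hgd0 : DifferentiableAt ℂ g 0 := hgd.differentiableAt hballF
  have hL : ‖fderiv ℂ f 0‖ ≤ 1 := Complex.norm_fderiv_le_one_of_mapsTo_ball hf.1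
    (by rw [h0]; exact hf.2.1.mapsTo.mono_right ball_subset_closedBall) one_pos
  have hM : ‖fderiv ℂ g 0‖ ≤ 1 := Complex.norm_fderiv_le_one_of_mapsTo_ball hgd
    (by rw [hg0]; exact hgm.mono_right ball_subset_closedBall) one_pos
  have hML := fderiv_comp_fderiv_eq_id_of_eventuallyEq hfd (by rwa [h0])
    (eventuallyEq_of_mem hballE hgf.1)
  have hLM := fderiv_comp_fderiv_eq_id_of_eventuallyEq hgd0 (by rwa [hg0])
    (eventuallyEq_of_mem hballF hgf.2)
  rw [h0] at hML
  rw [hg0] at hLM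
  exact nonempty_linearIsometryEquiv_of_opNorm_le_one hL hM hLM hML

theorem IsBiholo.nonempty_linearIsometryEquiv {G : Type*} [NormedAddCommGroup G]
    [InnerProductSpace ℂ G] {f : G → F} (hf : IsBiholo (ball (0 : G) 1) (ball (0 : F) 1) f) :
    Nonempty (G ≃ₗᵢ[ℂ] F) := by
  obtain ⟨a, ha, hfa⟩ := hf.2.1.surjOn (mem_ball_self one_pos)
  refine (hf.comp (isBiholo_ballInvolution (mem_ball_zero_iff.mp ha)))
    |>.nonempty_linearIsometryEquiv_of_map_zero ?_
  rw [Function.comp_apply, ballInvolution_zero, hfa]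

end Biholo

theorem norm_single_add_single {ι : Type*} [Fintype ι] [DecidableEq ι] {E : ι → Type*}
    [∀ i, NormedAddCommGroup (E i)] {i j : ι} (hij : i ≠ j) (u : E i) (w : E j) :
    ‖Pi.single i u + Pi.single j w‖ = max ‖u‖ ‖w‖ := by
  refine le_antisymm ((pi_norm_le_iff_of_nonneg (by positivity)).mpr fun l => ?_)
    (max_le ?_ ?_)
  · rcases eq_or_ne l i with rfl | hli
    · simp [hij]
    rcases eq_or_ne l j with rfl | hlj
    · simp [hli]
    simp [hli, hlj]
  · simpa [hij] using norm_le_pi_norm (Pi.single i u + Pi.single j w) i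
  · simpa [hij.symm] using norm_le_pi_norm (Pi.single i u + Pi.single j w) j

theorem not_strictConvexSpace_pi {ι : Type*} [Fintype ι] {E : ι → Type*}
    [∀ i, NormedAddCommGroup (E i)] [∀ i, NormedSpace ℝ (E i)] {i j : ι} (hij : i ≠ j)
    [Nontrivial (E i)] [Nontrivial (E j)] : ¬ StrictConvexSpace ℝ (Π i, E i) := by
  classical
  intro _
  obtain ⟨u, hu⟩ := exists_norm_eq (E i) zero_le_one
  obtain ⟨w, hw⟩ := exists_norm_eq (E j) zero_le_one
  -- `Pi.single i u` is the midpoint of two distinct points of the unit sphere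
  have heq := eq_of_norm_eq_of_norm_add_eq (x := Pi.single i u + Pi.single j w)
    (y := Pi.single i u + Pi.single j (-w))
    (by simp only [norm_single_add_single hij, norm_neg])
    (by
      rw [add_add_add_comm, ← Pi.single_add, ← Pi.single_add, add_neg_cancel, Pi.single_zero,
        add_zero, Pi.norm_single, norm_single_add_single hij, norm_single_add_single hij,
        norm_neg, ← two_smul ℝ u, norm_smul, hu, hw]
      norm_num)
  have hw0 : w = -w := Pi.single_injective j (add_left_cancel heq)
  have h2w : (2 : ℝ) • w = 0 := by rw [two_smul]; nth_rw 2 [hw0]; exact add_neg_cancel w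
  simpa [norm_smul, hw] using congrArg norm h2w

theorem stmt12_general (n : ℕ) (k : ℕ) (hk : 2 ≤ k) (d : Fin k → ℕ) (hd : ∀ i, 1 ≤ d i) :
    ¬ ∃ f : EuclideanSpace ℂ (Fin n) → (Π i : Fin k, EuclideanSpace ℂ (Fin (d i))),
      IsBiholo (ball (0 : EuclideanSpace ℂ (Fin n)) 1)
        (Set.univ.pi fun i => ball (0 : EuclideanSpace ℂ (Fin (d i))) 1) f := by
  rintro ⟨f, hf⟩
  rw [← ball_pi _ one_pos] at hf
  obtain ⟨e⟩ := hf.nonempty_linearIsometryEquiv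
  have (i : Fin k) : Nontrivial (EuclideanSpace ℂ (Fin (d i))) :=
    have : Nonempty (Fin (d i)) := ⟨⟨0, hd i⟩⟩
    inferInstance
  refine not_strictConvexSpace_pi (E := fun i => EuclideanSpace ℂ (Fin (d i)))
    (i := ⟨0, by omega⟩) (j := ⟨1, by omega⟩) (by simp) ?_
  exact LinearIsometry.strictConvexSpace
    { e.symm.toLinearEquiv.restrictScalars ℝ with norm_map' := e.symm.norm_map }

/-- the unit ball in `ℂⁿ` (`n ≥ 2`) is not biholomorphic to a product of
at least two balls. -/
theorem stmt12 (n : ℕ) (hn : 2 ≤ n) (k : ℕ) (hk : 2 ≤ k) (d : Fin k → ℕ)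
    (hd : ∀ i, 1 ≤ d i) (hsum : ∑ i, d i = n) :
    ¬ ∃ f : EuclideanSpace ℂ (Fin n) → (Π i : Fin k, EuclideanSpace ℂ (Fin (d i))),
      IsBiholo (ball (0 : EuclideanSpace ℂ (Fin n)) 1)
        (Set.univ.pi fun i => ball (0 : EuclideanSpace ℂ (Fin (d i))) 1) f :=
  stmt12_general n k hk d hd

end
end
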